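/- Let $\{A_n\}_n$ be a sequence of Hermitian matrices and $\{S_n\}_n$ a sequence of Hermitian positive definite matrices of the same sizes $d_n$ with uniformly bounded $\|A_n\|, \|S_n\|, \|S_n^{-1}\|$, and suppose $\{S_n - A_n\}_n$ is zero-distributed. Then the eigenvalues of $S_n^{-1}A_n$ are real and weakly clustered at $1$: for every $\epsilon>0$, $\#\{j : |\lambda_j(S_n^{-1}A_n) - 1| > \epsilon\} = o(d_n)$. -/

import Mathlib

open Filter Finset Matrix Topology MeasureTheory
open scoped ComplexOrder

/-- The (unsorted) singular values of a complex matrix: square roots of the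
eigenvalues of `Aᴴ * A`. -/
noncomputable def svals {m n : Type*} [Fintype m] [Fintype n] [DecidableEq n]
    (A : Matrix m n ℂ) (i : n) : ℝ :=
  Real.sqrt ((Matrix.isHermitian_conjTranspose_mul_self A).eigenvalues i)

/-- Singular values of a `Fin p × Fin q`-indexed complex matrix, arranged in
non-increasing order and indexed by `ℕ` (zero for indices `≥ q`); so
`svalFun A 0` is the largest singular value `σ₁(A)`. -/
noncomputable def svalFun {p q : ℕ} (A : Matrix (Fin p) (Fin q) ℂ) (j : ℕ) : ℝ :=
  if h : j < q then svals A (Tuple.sort (svals A) ((⟨j, h⟩ : Fin q).rev)) else 0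

/-- The spectral norm of a complex matrix: its largest singular value. -/
noncomputable def specNorm {m n : Type*} [Fintype m] [Fintype n] [DecidableEq n]
    (A : Matrix m n ℂ) : ℝ :=
  ⨆ i, svals A i

/-!
With `M = S^{-1/2}`, the matrix `S⁻¹A = M (M A)` has the same characteristic polynomial as
the Hermitian matrix `H = M A M`, so its eigenvalues `λᵢ` are real, and `H - 1 = M (A - S) M`.
Hence `∑ (λᵢ - 1)² = ‖H - 1‖_F² ≤ ‖S⁻¹‖² ‖S - A‖_F²`, and by Chebyshev at most
`‖S⁻¹‖² ‖S - A‖_F² / ε²` eigenvalues lie farther than `ε` from `1`. Finally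
`‖S - A‖_F² = ∑ σⱼ(S - A)²` is `o(dₙ)`: the singular values are uniformly bounded, so
testing zero-distribution against a compactly supported function equal to `x²` on their
range gives exactly `‖S - A‖_F² / dₙ → 0`.
-/

namespace Matrix

variable {m n l : Type*} [Fintype m] [Fintype n] [Fintype l]

noncomputable def frobeniusNormSq (X : Matrix m n ℂ) : ℝ :=
  ∑ i, ∑ j, ‖X i j‖ ^ 2

lemma frobeniusNormSq_nonneg (X : Matrix m n ℂ) : 0 ≤ frobeniusNormSq X := by
  unfold frobeniusNormSq; positivity

lemma frobeniusNormSq_neg (X : Matrix m n ℂ) : frobeniusNormSq (-X) = frobeniusNormSq X := by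
  simp [frobeniusNormSq]

lemma frobeniusNormSq_conjTranspose (X : Matrix m n ℂ) :
    frobeniusNormSq Xᴴ = frobeniusNormSq X := by
  rw [frobeniusNormSq, Finset.sum_comm]
  simp [frobeniusNormSq]

lemma trace_conjTranspose_mul_self (X : Matrix m n ℂ) :
    (Xᴴ * X).trace = (frobeniusNormSq X : ℂ) := by
  rw [frobeniusNormSq, Finset.sum_comm]
  push_cast
  refine Finset.sum_congr rfl fun j _ => Finset.sum_congr rfl fun i _ => ?_
  simp [Complex.conj_mul']

open scoped Matrix.Norms.L2Operator

lemma frobeniusNormSq_mul_le_left [DecidableEq n] (P : Matrix m n ℂ) (X : Matrix n l ℂ) :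
    frobeniusNormSq (P * X) ≤ ‖P‖ ^ 2 * frobeniusNormSq X := by
  rw [frobeniusNormSq, frobeniusNormSq, Finset.sum_comm,
    Finset.sum_comm (f := fun i j => ‖X i j‖ ^ 2), Finset.mul_sum]
  refine Finset.sum_le_sum fun j _ => ?_
  let x : EuclideanSpace ℂ n := WithLp.toLp 2 fun k => X k j
  calc ∑ i, ‖(P * X) i j‖ ^ 2 = ‖(EuclideanSpace.equiv m ℂ).symm (P *ᵥ x)‖ ^ 2 := by
        rw [EuclideanSpace.norm_sq_eq]; rfl
    _ ≤ (‖P‖ * ‖x‖) ^ 2 := pow_le_pow_left₀ (norm_nonneg _) (P.l2_opNorm_mulVec x) 2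
    _ = ‖P‖ ^ 2 * ∑ i, ‖X i j‖ ^ 2 := by rw [mul_pow, EuclideanSpace.norm_sq_eq]

lemma frobeniusNormSq_mul_le_right [DecidableEq n] [DecidableEq l] (X : Matrix m n ℂ)
    (P : Matrix n l ℂ) : frobeniusNormSq (X * P) ≤ frobeniusNormSq X * ‖P‖ ^ 2 := by
  simpa only [← conjTranspose_mul, frobeniusNormSq_conjTranspose, l2_opNorm_conjTranspose,
    mul_comm] using frobeniusNormSq_mul_le_left Pᴴ Xᴴ

namespace IsHermitian

variable [DecidableEq n] {A : Matrix n n ℂ}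

lemma trace_cfc (hA : A.IsHermitian) (f : ℝ → ℝ) :
    (cfc f A).trace = ∑ i, (f (hA.eigenvalues i) : ℂ) := by
  rw [hA.cfc_eq, IsHermitian.cfc, Unitary.conjStarAlgAut_apply, trace_mul_comm, ← mul_assoc]
  simp

lemma sum_sq_eigenvalues_sub_one (hA : A.IsHermitian) :
    ∑ i, (hA.eigenvalues i - 1) ^ 2 = frobeniusNormSq (A - 1) := by
  have hcfc : cfc (fun x : ℝ => (x - 1) ^ 2) A = (A - 1)ᴴ * (A - 1) := by
    have hA' : IsSelfAdjoint A := hA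
    rw [cfc_pow (fun x => x - 1) 2 A, cfc_sub (fun x => x) (fun _ => 1) A, cfc_id' ℝ A,
      cfc_const_one ℝ A, (hA.sub isHermitian_one).eq, sq]
  have h := hA.trace_cfc fun x => (x - 1) ^ 2
  rw [hcfc, trace_conjTranspose_mul_self] at h
  exact_mod_cast h.symm

lemma im_eq_zero_of_mem_roots_charpoly (hA : A.IsHermitian) {μ : ℂ}
    (hμ : μ ∈ A.charpoly.roots) : μ.im = 0 := by
  rw [hA.roots_charpoly_eq_eigenvalues] at hμ
  obtain ⟨i, -, rfl⟩ := Multiset.mem_map.mp hμ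
  simp

lemma card_roots_charpoly_far_from_one_mul_sq_le (hA : A.IsHermitian) {ε : ℝ} (hε : 0 ≤ ε) :
    ((A.charpoly.roots.filter fun μ => ε < ‖μ - 1‖).card : ℝ) * ε ^ 2 ≤
      frobeniusNormSq (A - 1) := by
  rw [hA.roots_charpoly_eq_eigenvalues, Multiset.filter_map, Multiset.card_map,
    ← hA.sum_sq_eigenvalues_sub_one, ← Finset.filter_val, Finset.card_val, ← nsmul_eq_mul]
  refine (Finset.card_nsmul_le_sum _ _ _ fun i hi => ?_).trans
    (Finset.sum_le_sum_of_subset_of_nonneg (Finset.filter_subset _ _) fun i _ _ => sq_nonneg _)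
  have hfar : ε < |hA.eigenvalues i - 1| := by
    simpa [← Complex.ofReal_one, ← Complex.ofReal_sub] using (Finset.mem_filter.mp hi).2
  simpa only [sq_abs] using pow_le_pow_left₀ hε hfar.le 2

end IsHermitian

end Matrix

section SingularValues

variable {m n : Type*} [Fintype m] [Fintype n] [DecidableEq n]

open scoped Matrix.Norms.L2Operator MatrixOrder

lemma svals_nonneg (X : Matrix m n ℂ) (i : n) : 0 ≤ svals X i :=
  Real.sqrt_nonneg _

lemma sq_svals (X : Matrix m n ℂ) (i : n) :
    svals X i ^ 2 = (isHermitian_conjTranspose_mul_self X).eigenvalues i :=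
  Real.sq_sqrt ((posSemidef_conjTranspose_mul_self X).eigenvalues_nonneg i)

lemma svals_le_specNorm (X : Matrix m n ℂ) (i : n) : svals X i ≤ specNorm X :=
  le_ciSup (Set.finite_range _).bddAbove i

lemma specNorm_nonneg (X : Matrix m n ℂ) : 0 ≤ specNorm X :=
  Real.iSup_nonneg (svals_nonneg X)

lemma svals_le_l2_opNorm (X : Matrix m n ℂ) (i : n) : svals X i ≤ ‖X‖ := by
  have hXX : IsSelfAdjoint (Xᴴ * X) := isHermitian_conjTranspose_mul_self X
  have h := ((le_algebraMap_iff_spectrum_le hXX).mp hXX.le_algebraMap_norm_self) _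
    ((isHermitian_conjTranspose_mul_self X).eigenvalues_mem_spectrum_real i)
  rw [← sq_svals, l2_opNorm_conjTranspose_mul_self, ← sq] at h
  exact abs_le_of_sq_le_sq' h (norm_nonneg X) |>.2

lemma l2_opNorm_le_specNorm (X : Matrix m n ℂ) : ‖X‖ ≤ specNorm X := by
  have hXX : IsSelfAdjoint (Xᴴ * X) := isHermitian_conjTranspose_mul_self X
  have hspec : ∀ x ∈ spectrum ℝ (Xᴴ * X), x ≤ specNorm X ^ 2 := by
    rw [(isHermitian_conjTranspose_mul_self X).spectrum_real_eq_range_eigenvalues]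
    rintro - ⟨i, rfl⟩
    rw [← sq_svals]
    exact pow_le_pow_left₀ (svals_nonneg X i) (svals_le_specNorm X i) 2
  have h := (CStarAlgebra.norm_le_iff_le_algebraMap (Xᴴ * X) (sq_nonneg (specNorm X))
    (posSemidef_conjTranspose_mul_self X).nonneg).mpr
    ((le_algebraMap_iff_spectrum_le hXX).mpr hspec)
  rw [l2_opNorm_conjTranspose_mul_self, ← sq] at h
  exact abs_le_of_sq_le_sq' h (specNorm_nonneg X) |>.2

lemma svals_sub_le_specNorm_add (X Y : Matrix m n ℂ) (i : n) :
    svals (X - Y) i ≤ specNorm X + specNorm Y :=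
  (svals_le_l2_opNorm _ i).trans <| (norm_sub_le X Y).trans <|
    add_le_add (l2_opNorm_le_specNorm X) (l2_opNorm_le_specNorm Y)

lemma sum_sq_svals (X : Matrix m n ℂ) : ∑ i, svals X i ^ 2 = X.frobeniusNormSq := by
  have h := (isHermitian_conjTranspose_mul_self X).trace_eq_sum_eigenvalues
  rw [trace_conjTranspose_mul_self] at h
  simp only [sq_svals]
  apply Complex.ofReal_injective
  simpa using h.symm

end SingularValues

lemma sum_range_svalFun {β : Type*} [AddCommMonoid β] {p q : ℕ}
    (X : Matrix (Fin p) (Fin q) ℂ) (F : ℝ → β) :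
    ∑ j ∈ Finset.range q, F (svalFun X j) = ∑ i, F (svals X i) := by
  rw [← Fin.sum_univ_eq_sum_range (fun j => F (svalFun X j)) q]
  refine Fintype.sum_equiv (Fin.revPerm.trans (Tuple.sort (svals X))) _ _ fun i => ?_
  rw [svalFun, dif_pos i.isLt]
  rfl

noncomputable def rampSq (c x : ℝ) : ℝ :=
  max 0 (min (x ^ 2) (2 * c ^ 2 - x ^ 2))

lemma continuous_rampSq (c : ℝ) : Continuous (rampSq c) := by
  unfold rampSq; fun_prop

lemma rampSq_eq_zero_of_two_mul_lt_abs {c x : ℝ} (hx : 2 * |c| < |x|) : rampSq c x = 0 := by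
  have : 2 * c ^ 2 - x ^ 2 ≤ 0 := by
    have := sq_lt_sq' (by linarith [abs_nonneg c]) hx
    nlinarith [sq_abs c, sq_abs x, sq_nonneg c]
  exact max_eq_left ((min_le_right _ _).trans this)

lemma hasCompactSupport_rampSq (c : ℝ) : HasCompactSupport (rampSq c) := by
  refine HasCompactSupport.intro (isCompact_Icc (a := -(2 * |c|)) (b := 2 * |c|)) fun x hx => ?_
  exact rampSq_eq_zero_of_two_mul_lt_abs (not_le.mp (mt abs_le.mp hx))

lemma rampSq_eq_sq {c x : ℝ} (hx₀ : 0 ≤ x) (hxc : x ≤ c) : rampSq c x = x ^ 2 := by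
  rw [rampSq, min_eq_left (by nlinarith), max_eq_right (sq_nonneg x)]

def IsZeroDistributed (d : ℕ → ℕ) (X : (n : ℕ) → Matrix (Fin (d n)) (Fin (d n)) ℂ) :
    Prop :=
  ∀ F : ℝ → ℂ, Continuous F → HasCompactSupport F →
    Tendsto (fun n => (1 / (d n : ℝ)) • ∑ j ∈ Finset.range (d n), F (svalFun (X n) j))
      atTop (𝓝 (F 0))

lemma IsZeroDistributed.tendsto_frobeniusNormSq_div {d : ℕ → ℕ}
    {X : (n : ℕ) → Matrix (Fin (d n)) (Fin (d n)) ℂ} (hX : IsZeroDistributed d X) {c : ℝ}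
    (hc : ∀ n i, svals (X n) i ≤ c) :
    Tendsto (fun n => (X n).frobeniusNormSq / d n) atTop (𝓝 0) := by
  set F : ℝ → ℂ := fun x => (rampSq (max c 0) x : ℂ)
  have hF : ∀ n, (1 / (d n : ℝ)) • ∑ j ∈ Finset.range (d n), F (svalFun (X n) j) =
      ((X n).frobeniusNormSq / d n : ℝ) := by
    intro n
    rw [sum_range_svalFun, ← sum_sq_svals]
    simp only [F, rampSq_eq_sq (svals_nonneg _ _) ((hc n _).trans (le_max_left c 0))]
    rw [Complex.real_smul]
    push_cast
    ring
  have h := hX F (Complex.continuous_ofReal.comp (continuous_rampSq _))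
    ((hasCompactSupport_rampSq _).comp_left Complex.ofReal_zero)
  have hF0 : F 0 = ((0 : ℝ) : ℂ) := by
    simp only [F, rampSq_eq_sq le_rfl (le_max_right c 0)]; norm_num
  rw [funext hF, hF0] at h
  exact Filter.tendsto_ofReal_iff.mp h

namespace Matrix

open scoped Matrix.Norms.L2Operator MatrixOrder

variable {n : Type*} [Fintype n] [DecidableEq n] {A S : Matrix n n ℂ}

noncomputable def symmPrecond (S A : Matrix n n ℂ) : Matrix n n ℂ :=
  CFC.sqrt S⁻¹ * A * CFC.sqrt S⁻¹

lemma isHermitian_sqrt (X : Matrix n n ℂ) : (CFC.sqrt X).IsHermitian :=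
  (CFC.sqrt_nonneg X).posSemidef.isHermitian

lemma isHermitian_symmPrecond (S : Matrix n n ℂ) (hA : A.IsHermitian) :
    (symmPrecond S A).IsHermitian := by
  unfold symmPrecond
  simpa only [(isHermitian_sqrt S⁻¹).eq] using
    isHermitian_conjTranspose_mul_mul (CFC.sqrt S⁻¹) hA

namespace PosDef

lemma sqrt_inv_mul_self (hS : S.PosDef) : CFC.sqrt S⁻¹ * CFC.sqrt S⁻¹ = S⁻¹ :=
  CFC.sqrt_mul_sqrt_self _ hS.inv.posSemidef.nonneg

lemma sqrt_inv_mul_mul_sqrt_inv (hS : S.PosDef) : CFC.sqrt S⁻¹ * S * CFC.sqrt S⁻¹ = 1 := by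
  have h : S * CFC.sqrt S⁻¹ * CFC.sqrt S⁻¹ = 1 := by
    rw [mul_assoc, hS.sqrt_inv_mul_self,
      mul_nonsing_inv _ ((isUnit_iff_isUnit_det S).mp hS.isUnit)]
  rw [mul_assoc]
  exact mul_eq_one_comm.mp h

lemma l2_opNorm_sqrt_inv_sq (hS : S.PosDef) : ‖CFC.sqrt S⁻¹‖ ^ 2 = ‖S⁻¹‖ := by
  rw [sq, ← l2_opNorm_conjTranspose_mul_self, (isHermitian_sqrt S⁻¹).eq, hS.sqrt_inv_mul_self]

lemma charpoly_inv_mul (hS : S.PosDef) (A : Matrix n n ℂ) :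
    (S⁻¹ * A).charpoly = (symmPrecond S A).charpoly := by
  rw [← hS.sqrt_inv_mul_self, mul_assoc, charpoly_mul_comm, symmPrecond, mul_assoc]

lemma symmPrecond_sub_one (hS : S.PosDef) (A : Matrix n n ℂ) :
    symmPrecond S A - 1 = CFC.sqrt S⁻¹ * (A - S) * CFC.sqrt S⁻¹ := by
  rw [← hS.sqrt_inv_mul_mul_sqrt_inv, symmPrecond, mul_sub, sub_mul]

lemma frobeniusNormSq_symmPrecond_sub_one_le (hS : S.PosDef) (A : Matrix n n ℂ) :
    frobeniusNormSq (symmPrecond S A - 1) ≤ ‖S⁻¹‖ ^ 2 * frobeniusNormSq (S - A) := by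
  set M := CFC.sqrt S⁻¹
  have hM : ‖M‖ ^ 2 * ‖M‖ ^ 2 = ‖S⁻¹‖ ^ 2 := by rw [← sq, hS.l2_opNorm_sqrt_inv_sq]
  calc frobeniusNormSq (symmPrecond S A - 1)
      ≤ ‖M‖ ^ 2 * (frobeniusNormSq (A - S) * ‖M‖ ^ 2) := by
        rw [hS.symmPrecond_sub_one, mul_assoc]
        exact (frobeniusNormSq_mul_le_left _ _).trans
          (mul_le_mul_of_nonneg_left (frobeniusNormSq_mul_le_right _ _) (sq_nonneg _))
    _ = ‖S⁻¹‖ ^ 2 * frobeniusNormSq (S - A) := by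
        rw [← neg_sub, frobeniusNormSq_neg, ← hM]; ring

lemma card_roots_charpoly_inv_mul_far_from_one_mul_sq_le (hS : S.PosDef) (hA : A.IsHermitian)
    {ε : ℝ} (hε : 0 ≤ ε) :
    (((S⁻¹ * A).charpoly.roots.filter fun μ => ε < ‖μ - 1‖).card : ℝ) * ε ^ 2 ≤
      specNorm S⁻¹ ^ 2 * frobeniusNormSq (S - A) := by
  rw [hS.charpoly_inv_mul]
  refine ((isHermitian_symmPrecond S hA).card_roots_charpoly_far_from_one_mul_sq_le hε).trans <|
    (hS.frobeniusNormSq_symmPrecond_sub_one_le A).trans ?_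
  gcongr
  · exact frobeniusNormSq_nonneg _
  · exact l2_opNorm_le_specNorm _

end PosDef

end Matrix

theorem precond_eigenvalues_cluster_one_general (d : ℕ → ℕ)
    (A S : (n : ℕ) → Matrix (Fin (d n)) (Fin (d n)) ℂ)
    (hA : ∀ n, (A n).IsHermitian) (hS : ∀ n, (S n).PosDef)
    (hzd : ∀ F : ℝ → ℂ, Continuous F → HasCompactSupport F →
      Tendsto (fun n => (1 / (d n : ℝ)) •
          ∑ j ∈ Finset.range (d n), F (svalFun (S n - A n) j))
        atTop (nhds (F 0)))
    (hSinv : ∃ C : ℝ, ∀ n, specNorm ((S n)⁻¹) ≤ C)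
    (hAb : ∃ C : ℝ, ∀ n, specNorm (A n) ≤ C)
    (hSb : ∃ C : ℝ, ∀ n, specNorm (S n) ≤ C) :
    (∀ n, ∀ μ ∈ ((S n)⁻¹ * A n).charpoly.roots, μ.im = 0) ∧
    (∀ ε : ℝ, 0 < ε →
      Tendsto (fun n =>
          (((((S n)⁻¹ * A n).charpoly.roots.filter
              (fun μ => ε < ‖μ - 1‖)).card : ℝ)) / d n)
        atTop (nhds 0)) := by
  obtain ⟨Ci, hCi⟩ := hSinv
  obtain ⟨Ca, hCa⟩ := hAb
  obtain ⟨Cs, hCs⟩ := hSb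
  refine ⟨fun n μ hμ => ?_, fun ε hε => ?_⟩
  · rw [(hS n).charpoly_inv_mul] at hμ
    exact (isHermitian_symmPrecond (S n) (hA n)).im_eq_zero_of_mem_roots_charpoly hμ
  have hzd : IsZeroDistributed d fun n => S n - A n := hzd
  have hfro := (hzd.tendsto_frobeniusNormSq_div fun n i =>
    (svals_sub_le_specNorm_add _ _ i).trans (add_le_add (hCs n) (hCa n))).const_mul
    (Ci ^ 2 / ε ^ 2)
  rw [mul_zero] at hfro
  refine squeeze_zero (fun n => by positivity) (fun n => ?_) hfro
  have hcount := (hS n).card_roots_charpoly_inv_mul_far_from_one_mul_sq_le (hA n) hε.le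
  have hCi2 : specNorm (S n)⁻¹ ^ 2 ≤ Ci ^ 2 := pow_le_pow_left₀ (specNorm_nonneg _) (hCi n) 2
  rw [← mul_div_assoc]
  gcongr
  rw [div_mul_eq_mul_div, le_div_iff₀ (by positivity)]
  exact hcount.trans (by gcongr; exact frobeniusNormSq_nonneg _)

/-- for Hermitian `{Aₙ}` and Hermitian positive definite `{Sₙ}`
with uniformly bounded `‖Aₙ‖, ‖Sₙ‖, ‖Sₙ⁻¹‖` and `{Sₙ - Aₙ}ₙ` zero-distributed,
the eigenvalues of `Sₙ⁻¹Aₙ` (the roots of its characteristic polynomial,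
with multiplicity) are real and weakly clustered at `1`. -/
theorem precond_eigenvalues_cluster_one (d : ℕ → ℕ)
    (hd : Tendsto d atTop atTop)
    (A S : (n : ℕ) → Matrix (Fin (d n)) (Fin (d n)) ℂ)
    (hA : ∀ n, (A n).IsHermitian) (hS : ∀ n, (S n).PosDef)
    (hzd : ∀ F : ℝ → ℂ, Continuous F → HasCompactSupport F →
      Tendsto (fun n => (1 / (d n : ℝ)) •
          ∑ j ∈ Finset.range (d n), F (svalFun (S n - A n) j))
        atTop (nhds (F 0)))
    (hSinv : ∃ C : ℝ, ∀ n, specNorm ((S n)⁻¹) ≤ C)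
    (hAb : ∃ C : ℝ, ∀ n, specNorm (A n) ≤ C)
    (hSb : ∃ C : ℝ, ∀ n, specNorm (S n) ≤ C) :
    (∀ n, ∀ μ ∈ ((S n)⁻¹ * A n).charpoly.roots, μ.im = 0) ∧
    (∀ ε : ℝ, 0 < ε →
      Tendsto (fun n =>
          (((((S n)⁻¹ * A n).charpoly.roots.filter
              (fun μ => ε < ‖μ - 1‖)).card : ℝ)) / d n)
        atTop (nhds 0)) :=
  precond_eigenvalues_cluster_one_general d A S hA hS hzd hSinv hAb hSb
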